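/- Let n ≥ 3 be an integer and define H(t) = ∫₀^∞ (t+σ)^{−3/2}(1+σ)^{−(n−1)/2} dσ for t > 0. Then H is differentiable on (0,+∞) and satisfies the identity −n H(t) + 2(1−t) H′(t) + 2 t^{−3/2} = 0 for every t > 0. -/

import Mathlib

open MeasureTheory Set Filter Topology
open scoped ENNReal NNReal Real BigOperators RealInnerProductSpace

noncomputable section

attribute [local instance] Classical.propDecidable

/-- `ℝⁿ` as a Euclidean space. -/
abbrev Euc (n : ℕ) := EuclideanSpace ℝ (Fin n)

/-- The anisotropic interaction kernel `W_α`, with values in `[0,+∞]`: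
`W_α(x) = 1/|x|^(n-2) + α x₁²/|x|ⁿ` for `x ≠ 0`, and `W_α(0) = +∞`. -/
def kerW (n : ℕ) [NeZero n] (α : ℝ) (x : Euc n) : ℝ≥0∞ :=
  if x = 0 then ⊤
  else ENNReal.ofReal (1 / ‖x‖ ^ (n - 2) + α * (x 0) ^ 2 / ‖x‖ ^ n)

/-- The nonlocal energy `I_α(μ) = ∬ W_α(x-y) dμ(x)dμ(y) + ∫ |x|² dμ(x)`. -/
def energyI (n : ℕ) [NeZero n] (α : ℝ) (μ : Measure (Euc n)) : ℝ≥0∞ :=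
  (∫⁻ p : Euc n × Euc n, kerW n α (p.1 - p.2) ∂(μ.prod μ)) +
    ∫⁻ x, ENNReal.ofReal (‖x‖ ^ 2) ∂μ


/-- The elliptic-type integral `H(t) = ∫₀^∞ (t+σ)^{-3/2}(1+σ)^{-(n-1)/2} dσ`. -/
def Hfun (n : ℕ) (t : ℝ) : ℝ :=
  ∫ σ in Ioi (0 : ℝ), (t + σ) ^ (-(3 / 2) : ℝ) * (1 + σ) ^ (-(((n : ℝ) - 1) / 2))

/-!
Put `I_{a,c}(t) = ∫₀^∞ (t+σ)^a (1+σ)^c dσ`, so that `H = I_{-3/2, -(n-1)/2}`. Differentiating under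
the integral sign (the derivative is dominated by its value at `t/2`) gives `I_{a,c}' = a I_{a-1,c}`.
Writing `1 + σ = (t + σ) + (1 - t)`, the derivative of `(t+σ)^a (1+σ)^{c+1}` in `σ` is
`(a+c+1)(t+σ)^a(1+σ)^c + a(1-t)(t+σ)^{a-1}(1+σ)^c`; integrating it over `(0, ∞)` yields
`(a+c+1) I_{a,c}(t) + (1-t) I_{a,c}'(t) = -t^a`, which for `a = -3/2`, `c = -(n-1)/2` is the
identity divided by `-2`.
-/

def shiftedRpowIntegral (a c t : ℝ) : ℝ :=
  ∫ σ in Ioi (0 : ℝ), (t + σ) ^ a * (1 + σ) ^ c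

section ShiftedRpowIntegral

variable {a b c t : ℝ}

lemma continuousOn_shiftedRpow_integrand (ht : 0 < t) :
    ContinuousOn (fun σ : ℝ => (t + σ) ^ a * (1 + σ) ^ c) (Ici 0) := by
  refine ContinuousOn.mul ?_ ?_ <;> refine ContinuousOn.rpow_const (by fun_prop) fun σ hσ => ?_ <;>
    · have : (0 : ℝ) ≤ σ := hσ
      left; positivity

lemma aestronglyMeasurable_shiftedRpow_integrand (ht : 0 < t) :
    AEStronglyMeasurable (fun σ : ℝ => (t + σ) ^ a * (1 + σ) ^ c) (volume.restrict (Ioi 0)) :=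
  ((continuousOn_shiftedRpow_integrand ht).mono Ioi_subset_Ici_self).aestronglyMeasurable
    measurableSet_Ioi

/-- Because `t + σ ≥ min t 1 * (1 + σ)` for `σ ≥ 0`. -/
lemma rpow_add_le_min_rpow_mul_rpow (ht : 0 < t) (hb : b ≤ 0) {σ : ℝ} (hσ : 0 ≤ σ) :
    (t + σ) ^ b ≤ min t 1 ^ b * (1 + σ) ^ b := by
  rw [← Real.mul_rpow (by positivity) (by positivity)]
  refine Real.rpow_le_rpow_of_nonpos (by positivity) ?_ hb
  nlinarith [min_le_left t 1, min_le_right t 1]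

lemma shiftedRpow_integrand_le (ht : 0 < t) (hb : b ≤ 0) {σ : ℝ} (hσ : 0 ≤ σ) :
    (t + σ) ^ b * (1 + σ) ^ c ≤ min t 1 ^ b * (1 + σ) ^ (b + c) := by
  rw [Real.rpow_add (by positivity), ← mul_assoc]
  gcongr
  exact rpow_add_le_min_rpow_mul_rpow ht hb hσ

lemma integrableOn_shiftedRpow_integrand (ht : 0 < t) (hb : b ≤ 0) (hbc : b + c < -1) :
    IntegrableOn (fun σ : ℝ => (t + σ) ^ b * (1 + σ) ^ c) (Ioi 0) := by
  have hcont := continuousOn_shiftedRpow_integrand (a := b) (c := c) ht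
  rw [← Ioc_union_Ioi_eq_Ioi zero_le_one]
  refine IntegrableOn.union ?_ ?_
  · exact ((hcont.mono Icc_subset_Ici_self).integrableOn_Icc).mono_set Ioc_subset_Icc_self
  · refine ((integrableOn_Ioi_rpow_of_lt hbc one_pos).const_mul (min t 1 ^ b)).mono' ?_ ?_
    · exact (hcont.mono fun σ (hσ : 1 < σ) => zero_le_one.trans hσ.le).aestronglyMeasurable
        measurableSet_Ioi
    · filter_upwards [ae_restrict_mem measurableSet_Ioi] with σ (hσ : 1 < σ)
      have hσ0 : 0 < σ := one_pos.trans hσ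
      rw [Real.norm_of_nonneg (by positivity)]
      refine (shiftedRpow_integrand_le ht hb hσ0.le).trans ?_
      exact mul_le_mul_of_nonneg_left
        (Real.rpow_le_rpow_of_nonpos hσ0 (by linarith) (by linarith)) (by positivity)

lemma hasDerivAt_shiftedRpowIntegral (ht : 0 < t) (ha : a ≤ 0) (hac : a + c < -1) :
    HasDerivAt (shiftedRpowIntegral a c) (a * shiftedRpowIntegral (a - 1) c t) t := by
  have hball {x : ℝ} (hx : x ∈ Metric.ball t (t / 2)) : t / 2 < x := by
    rw [Metric.mem_ball, Real.dist_eq, abs_lt] at hx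
    linarith
  have hbound : ∀ᵐ σ ∂(volume.restrict (Ioi (0 : ℝ))), ∀ x ∈ Metric.ball t (t / 2),
      ‖a * ((x + σ) ^ (a - 1) * (1 + σ) ^ c)‖ ≤ |a| * ((t / 2 + σ) ^ (a - 1) * (1 + σ) ^ c) := by
    filter_upwards [ae_restrict_mem measurableSet_Ioi] with σ (hσ : 0 < σ) x hx
    have hxσ : 0 < x + σ := by linarith [hball hx]
    rw [norm_mul, Real.norm_eq_abs a, Real.norm_of_nonneg (by positivity)]
    refine mul_le_mul_of_nonneg_left (mul_le_mul_of_nonneg_right ?_ (by positivity)) (abs_nonneg a)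
    exact Real.rpow_le_rpow_of_nonpos (by positivity) (by linarith [hball hx]) (by linarith)
  have hderiv : ∀ᵐ σ ∂(volume.restrict (Ioi (0 : ℝ))), ∀ x ∈ Metric.ball t (t / 2),
      HasDerivAt (fun y => (y + σ) ^ a * (1 + σ) ^ c) (a * ((x + σ) ^ (a - 1) * (1 + σ) ^ c)) x := by
    filter_upwards [ae_restrict_mem measurableSet_Ioi] with σ (hσ : 0 < σ) x hx
    have hxσ : 0 < x + σ := by linarith [hball hx]
    exact ((((hasDerivAt_id' x).add_const σ).rpow_const (Or.inl hxσ.ne')).mul_const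
      ((1 + σ) ^ c)).congr_deriv (by ring)
  have key := hasDerivAt_integral_of_dominated_loc_of_deriv_le
    (F := fun x σ => (x + σ) ^ a * (1 + σ) ^ c) (Metric.ball_mem_nhds t (half_pos ht))
    (by filter_upwards [eventually_gt_nhds ht] with x hx
        exact aestronglyMeasurable_shiftedRpow_integrand hx)
    (integrableOn_shiftedRpow_integrand ht ha hac)
    ((aestronglyMeasurable_shiftedRpow_integrand ht).const_mul a) hbound
    ((integrableOn_shiftedRpow_integrand (half_pos ht) (by linarith) (by linarith)).const_mul |a|)
    hderiv
  unfold shiftedRpowIntegral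
  rw [← integral_const_mul]
  exact key.2

lemma tendsto_shiftedRpow_integrand_atTop (ht : 0 < t) (hb : b ≤ 0) (hbc : b + c < 0) :
    Tendsto (fun σ : ℝ => (t + σ) ^ b * (1 + σ) ^ c) atTop (𝓝 0) := by
  have hdecay : Tendsto (fun σ : ℝ => min t 1 ^ b * (1 + σ) ^ (b + c)) atTop (𝓝 0) := by
    have := (tendsto_rpow_neg_atTop (neg_pos.2 hbc)).comp (tendsto_atTop_add_const_left _ 1 tendsto_id)
    simpa only [neg_neg, mul_zero, Function.comp_def, id] using this.const_mul (min t 1 ^ b)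
  refine squeeze_zero' ?_ ?_ hdecay
  · filter_upwards [eventually_ge_atTop 0] with σ hσ
    positivity
  · filter_upwards [eventually_ge_atTop 0] with σ hσ
    exact shiftedRpow_integrand_le ht hb hσ

lemma hasDerivAt_rpow_mul_rpow_add_one (ht : 0 < t) {σ : ℝ} (hσ : 0 ≤ σ) :
    HasDerivAt (fun s : ℝ => (t + s) ^ a * (1 + s) ^ (c + 1))
      ((a + c + 1) * ((t + σ) ^ a * (1 + σ) ^ c) + a * (1 - t) * ((t + σ) ^ (a - 1) * (1 + σ) ^ c))
      σ := by
  have htσ : t + σ ≠ 0 := by positivity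
  have h1σ : 1 + σ ≠ 0 := by positivity
  have hprod := (((hasDerivAt_id' σ).const_add t).rpow_const (p := a) (Or.inl htσ)).mul
    (((hasDerivAt_id' σ).const_add 1).rpow_const (p := c + 1) (Or.inl h1σ))
  refine hprod.congr_deriv ?_
  have hpow : (t + σ) ^ a = (t + σ) ^ (a - 1) * (t + σ) := by
    rw [← Real.rpow_add_one htσ, sub_add_cancel]
  rw [add_sub_cancel_right, Real.rpow_add_one h1σ, hpow]
  ring

lemma shiftedRpowIntegral_recurrence (ht : 0 < t) (ha : a ≤ 0) (hac : a + c + 1 < 0) :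
    (a + c + 1) * shiftedRpowIntegral a c t + a * (1 - t) * shiftedRpowIntegral (a - 1) c t =
      -t ^ a := by
  have hint := (integrableOn_shiftedRpow_integrand (c := c) ht ha (by linarith)).const_mul (a + c + 1)
  have hint' := (integrableOn_shiftedRpow_integrand (c := c) ht (by linarith : a - 1 ≤ 0)
    (by linarith)).const_mul (a * (1 - t))
  have hftc := integral_Ioi_of_hasDerivAt_of_tendsto'
    (fun σ (hσ : 0 ≤ σ) => hasDerivAt_rpow_mul_rpow_add_one (a := a) (c := c) ht hσ)
    (hint.add hint') (tendsto_shiftedRpow_integrand_atTop ht ha (by linarith))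
  rw [integral_add hint hint', integral_const_mul, integral_const_mul] at hftc
  simpa [shiftedRpowIntegral] using hftc

end ShiftedRpowIntegral

theorem statement13 (n : ℕ) (hn : 3 ≤ n) :
    ∀ t : ℝ, 0 < t →
      DifferentiableAt ℝ (Hfun n) t ∧
      -(n : ℝ) * Hfun n t + 2 * (1 - t) * deriv (Hfun n) t
        + 2 * t ^ (-(3 / 2) : ℝ) = 0 := by
  intro t ht
  have hn3 : (3 : ℝ) ≤ n := by exact_mod_cast hn
  have hH : Hfun n = shiftedRpowIntegral (-(3 / 2)) (-(((n : ℝ) - 1) / 2)) := rfl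
  have hderiv := hasDerivAt_shiftedRpowIntegral (c := -(((n : ℝ) - 1) / 2)) ht
    (by norm_num : -(3 / 2 : ℝ) ≤ 0) (by linarith)
  have hrec := shiftedRpowIntegral_recurrence (c := -(((n : ℝ) - 1) / 2)) ht
    (by norm_num : -(3 / 2 : ℝ) ≤ 0) (by linarith)
  rw [hH]
  refine ⟨hderiv.differentiableAt, ?_⟩
  rw [hderiv.deriv]
  linear_combination 2 * hrec
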